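/- Let L and U be the n×n matrices defined by L_{j,j} = 1, L_{j+1,j} = s·r^(j-1)·λ(j-1)/λ(j), all other entries of L zero, and U_{j,j} = λ(j)/λ(j-1), U_{j,j+1} = s·r^(j-1), all other entries of U zero. Then for each j with 1 ≤ j ≤ n, the diagonal entry of the product satisfies (LU)_{j,j} = 1. -/
import Mathlib


/-- The Gaussian `q`-binomial coefficient `[n choose k]_q`, defined via the
Pascal-type recursion. It agrees with `(q;q)_n / ((q;q)_k (q;q)_{n-k})`. -/
def qbinom {R : Type*} [CommRing R] (q : R) : ℕ → ℕ → R
  | _, 0 => 1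
  | 0, _ + 1 => 0
  | n + 1, k + 1 => qbinom q n (k + 1) + q ^ (n - k) * qbinom q n k

/-- `λ(j) = Σ_{0 ≤ k ≤ j/2} [j-k choose k]_q · (-1)^k · q^(k(k-1)) · z^k`. -/
def lam {R : Type*} [CommRing R] (q z : R) (j : ℕ) : R :=
  ∑ k ∈ Finset.range (j / 2 + 1),
    qbinom q (j - k) k * (-1 : R) ^ k * q ^ (k * (k - 1)) * z ^ k


def lterm {R : Type*} [CommRing R] (q z : R) (m k : ℕ) : R :=
  qbinom q (m - k) k * (-1 : R) ^ k * q ^ (k * (k - 1)) * z ^ k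

lemma qbinom_eq_zero {R : Type*} [CommRing R] (q : R) :
    ∀ n k, n < k → qbinom q n k = 0
  | _, 0, h => absurd h (by omega)
  | 0, _ + 1, _ => rfl
  | n + 1, k + 1, h => by
      rw [qbinom, qbinom_eq_zero q n (k + 1) (by omega), qbinom_eq_zero q n k (by omega)]
      ring

lemma lterm_eq_zero {R : Type*} [CommRing R] (q z : R) (m k : ℕ) (h : m / 2 < k) :
    lterm q z m k = 0 := by
  rw [lterm, qbinom_eq_zero q (m - k) k (by omega)]
  ring

lemma lam_eq_sum {R : Type*} [CommRing R] (q z : R) (m N : ℕ) (h : m / 2 + 1 ≤ N) :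
    lam q z m = ∑ k ∈ Finset.range N, lterm q z m k := by
  rw [lam]
  exact Finset.sum_subset (Finset.range_subset_range.2 h) fun k _ hk =>
    lterm_eq_zero q z m k (by simpa using hk)

lemma lterm_rec {R : Type*} [CommRing R] (q z : R) (j k : ℕ) :
    lterm q z (j + 2) (k + 1) = lterm q z (j + 1) (k + 1) - z * q ^ j * lterm q z j k := by
  by_cases h : 2 * k ≤ j
  · have h1 : j + 2 - (k + 1) = (j - k) + 1 := by omega
    have h2 : j + 1 - (k + 1) = j - k := by omega
    rw [lterm, lterm, lterm, h1, h2, qbinom]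
    have hc : (k + 1) * k = k * (k - 1) + 2 * k := by
      cases k with
      | zero => rfl
      | succ m => simp [Nat.succ_sub_one]; ring
    have he : j - k - k + (k + 1) * k = j + k * (k - 1) := by
      rw [hc]; omega
    have hq : q ^ (j - k - k) * q ^ ((k + 1) * k) = q ^ j * q ^ (k * (k - 1)) := by
      rw [← pow_add, ← pow_add, he, add_comm j]
    simp only [Nat.add_sub_cancel]
    linear_combination (qbinom q (j - k) k * (-1 : R) ^ (k + 1) * z ^ (k + 1)) * hq
  · rw [lterm, lterm, lterm, qbinom_eq_zero q (j + 2 - (k + 1)) (k + 1) (by omega),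
      qbinom_eq_zero q (j + 1 - (k + 1)) (k + 1) (by omega),
      qbinom_eq_zero q (j - k) k (by omega)]
    ring

lemma lam_rec {R : Type*} [CommRing R] (q z : R) (j : ℕ) :
    lam q z (j + 2) = lam q z (j + 1) - z * q ^ j * lam q z j := by
  rw [lam_eq_sum q z (j + 2) (j / 2 + 2) (by omega),
      lam_eq_sum q z (j + 1) (j / 2 + 2) (by omega),
      lam_eq_sum q z j (j / 2 + 1) (by omega),
      Finset.sum_range_succ' _ (j / 2 + 1), Finset.sum_range_succ' _ (j / 2 + 1)]
  simp only [lterm_rec]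
  have h0 : ∀ m : ℕ, lterm q z m 0 = 1 := by
    intro m; simp [lterm, qbinom]
  rw [Finset.sum_sub_distrib, h0, h0, Finset.mul_sum]
  ring

/-- The unit lower bidiagonal matrix `L` (1-based: `L_{j,j} = 1`,
`L_{j+1,j} = s·r^(j-1)·λ(j-1)/λ(j)`), written with 0-based `Fin n` indices. -/
def Lmat {F : Type*} [Field F] (r s : F) (n : ℕ) : Matrix (Fin n) (Fin n) F :=
  Matrix.of fun a b =>
    if (a : ℕ) = (b : ℕ) then 1
    else if (a : ℕ) = (b : ℕ) + 1 then
      s * r ^ (b : ℕ) * lam (r ^ 2) (s ^ 2) (b : ℕ) / lam (r ^ 2) (s ^ 2) ((b : ℕ) + 1)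
    else 0

/-- The upper bidiagonal matrix `U` (1-based: `U_{j,j} = λ(j)/λ(j-1)`,
`U_{j,j+1} = s·r^(j-1)`), written with 0-based `Fin n` indices. -/
def Umat {F : Type*} [Field F] (r s : F) (n : ℕ) : Matrix (Fin n) (Fin n) F :=
  Matrix.of fun a b =>
    if (a : ℕ) = (b : ℕ) then
      lam (r ^ 2) (s ^ 2) ((a : ℕ) + 1) / lam (r ^ 2) (s ^ 2) (a : ℕ)
    else if (b : ℕ) = (a : ℕ) + 1 then s * r ^ (a : ℕ)
    else 0

/-- With `q = r²`, `z = s²`, and `λ(j) ≠ 0` for `0 ≤ j ≤ n`, every diagonal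
entry of the product `L·U` equals `1`:  `(LU)_{j,j} = 1` for `1 ≤ j ≤ n`. -/
theorem LU_diag {F : Type*} [Field F] (r s : F) (n : ℕ)
    (hlam : ∀ j : ℕ, j ≤ n → lam (r ^ 2) (s ^ 2) j ≠ 0)
    (j : ℕ) (hj1 : 1 ≤ j) (hjn : j ≤ n) :
    (Lmat r s n * Umat r s n) ⟨j - 1, by omega⟩ ⟨j - 1, by omega⟩ = 1 := by
  rw [Matrix.mul_apply]
  by_cases hj2 : j = 1
  · subst hj2
    rw [Finset.sum_eq_single (⟨0, by omega⟩ : Fin n)]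
    · simp [Lmat, Umat, lam, qbinom]
    · intro b _ hb
      have hb' : (b : ℕ) ≠ 0 := fun h => hb (Fin.ext h)
      simp only [Lmat, Matrix.of_apply]
      rw [if_neg (by omega), if_neg (by omega), zero_mul]
    · intro h; exact absurd (Finset.mem_univ _) h
  · obtain ⟨m, rfl⟩ : ∃ m, j = m + 2 := ⟨j - 2, by omega⟩
    have hsub : m + 2 - 1 = m + 1 := by omega
    have hm1 : m + 1 ≤ n := by omega
    rw [show (∑ k : Fin n, Lmat r s n ⟨m + 2 - 1, by omega⟩ k *
        Umat r s n k ⟨m + 2 - 1, by omega⟩) =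
        ∑ k ∈ ({⟨m, by omega⟩, ⟨m + 1, by omega⟩} : Finset (Fin n)),
          Lmat r s n ⟨m + 2 - 1, by omega⟩ k * Umat r s n k ⟨m + 2 - 1, by omega⟩ from
      (Finset.sum_subset (Finset.subset_univ _) ?_).symm]
    · rw [Finset.sum_pair (by simp [Fin.ext_iff])]
      simp only [Lmat, Umat, Matrix.of_apply, hsub]
      norm_num
      have h1 := hlam (m + 1) (by omega)
      have h2 := hlam m (by omega)
      rw [lam_rec]
      field_simp
      ring
    · intro x _ hx
      simp only [Finset.mem_insert, Finset.mem_singleton, Fin.ext_iff] at hx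
      push_neg at hx
      simp only [Lmat, Matrix.of_apply, hsub]
      rw [if_neg (by omega), if_neg (by omega), zero_mul]
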